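/- Let R be a commutative ring, M an R-module, and ι : M → Λ(M) the canonical inclusion into the exterior algebra. Let n ≥ 1, let A be an n × n matrix over R, and let y : Fin n → R and w, e : Fin n → M. Define s = ∑_i y_i • ι(e_i), t = ∑_i ι(w_i) * ι(e_i), s_A = ∑_i (∑_j A_{ij} y_j) • ι(e_i), and t_A = ∑_i ∑_j A_{ij} • (ι(w_j) * ι(e_i)). Then s_A * t_A^{n−1} = det(A) • (s * t^{n−1}). -/

import Mathlib

/-!
Put `u i = (y i, w i) ∈ R × M`. The blocks `ι (w k) * ι (e k)` are even, hence central and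
square-zero, and `ι (e i) * (ι (w i) * ι (e i)) = 0`; so expanding the power gives
`s * t ^ (n - 1) = (n - 1)! • G u` with `G u = ∑ i, y i • ι (e i) * ∏ k ≠ i, ι (w k) * ι (e k)`.
Now `G` is multilinear and alternating in `u`, and `s_A`, `t_A` are `s`, `t` evaluated at the
vectors `∑ j, A i j • u j`, so both sides acquire the same factor `det A`.
-/

open ExteriorAlgebra Nat

theorem add_pow_succ_of_mul_self_eq_zero {C : Type*} [CommRing C] {x : C} (hx : x * x = 0)
    (y : C) (m : ℕ) : (x + y) ^ (m + 1) = y ^ (m + 1) + (m + 1) * x * y ^ m := by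
  induction m with
  | zero => ring
  | succ m ih =>
    rw [pow_succ, ih]
    push_cast
    linear_combination (m + 1 : C) * y ^ m * hx

namespace Finset

variable {ι C : Type*} [CommRing C] [DecidableEq ι]

theorem sum_pow_card_of_mul_self_eq_zero (s : Finset ι) {b : ι → C}
    (hb : ∀ k ∈ s, b k * b k = 0) : (∑ k ∈ s, b k) ^ #s = (#s)! * ∏ k ∈ s, b k := by
  induction s using Finset.induction_on with
  | empty => simp
  | @insert j s hj ih =>
    have ih := ih fun k hk => hb k (mem_insert_of_mem hk)
    have hvanish : (∑ k ∈ s, b k) ^ (#s + 1) = 0 := by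
      rw [pow_succ, ih, mul_assoc, mul_sum, sum_eq_zero, mul_zero]
      intro k hk
      rw [← mul_prod_erase s b hk, mul_right_comm, hb k (mem_insert_of_mem hk), zero_mul]
    rw [sum_insert hj, card_insert_of_notMem hj,
      add_pow_succ_of_mul_self_eq_zero (hb j (mem_insert_self j s)), hvanish, ih,
      prod_insert hj, factorial_succ]
    push_cast
    ring

theorem dvd_sum_pow_sub_factorial_mul_prod_erase {s : Finset ι} {b : ι → C}
    (hb : ∀ k ∈ s, b k * b k = 0) {i : ι} (hi : i ∈ s) :
    b i ∣ (∑ k ∈ s, b k) ^ (#s - 1) - (#s - 1)! * ∏ k ∈ s.erase i, b k := by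
  have hcard : #s - 1 = #(s.erase i) := (card_erase_of_mem hi).symm
  rw [hcard, ← sum_pow_card_of_mul_self_eq_zero _ fun k hk => hb k (mem_of_mem_erase hk)]
  simpa [← add_sum_erase s b hi] using
    sub_dvd_pow_sub_pow (b i + ∑ k ∈ s.erase i, b k) (∑ k ∈ s.erase i, b k) #(s.erase i)

end Finset

namespace AlternatingMap

variable {R N P : Type*} [CommRing R] [AddCommGroup N] [Module R N] [AddCommGroup P] [Module R P]

theorem eq_smulRight_basis_det {ι : Type*} [Fintype ι] [DecidableEq ι]
    (e : Module.Basis ι R N) (f : N [⋀^ι]→ₗ[R] P) : f = e.det.smulRight (f e) := by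
  refine Module.Basis.ext_alternating e fun v hv => ?_
  let σ : Equiv.Perm ι := Equiv.ofBijective v (Finite.injective_iff_bijective.1 hv)
  change f (e ∘ σ) = e.det (e ∘ σ) • f e
  simp [AlternatingMap.map_perm, Module.Basis.det_self]

theorem map_sum_smul_eq_det_smul {n : Type*} [Fintype n] [DecidableEq n]
    (f : N [⋀^n]→ₗ[R] P) (A : Matrix n n R) (v : n → N) :
    f (fun i => ∑ j, A i j • v j) = A.det • f v := by
  have h := congr($(eq_smulRight_basis_det (Pi.basisFun R n)
    (f.compLinearMap (Fintype.linearCombination R v))) fun i j => A i j)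
  simp only [compLinearMap_apply, smulRight_apply, Fintype.linearCombination_apply,
    Pi.basisFun_apply, Pi.single_apply, ite_smul, one_smul, zero_smul, Finset.sum_ite_eq',
    Finset.mem_univ, if_true, Pi.basisFun_det_apply] at h
  exact h

end AlternatingMap

namespace ExteriorAlgebra

variable {R M : Type*} [CommRing R] [AddCommGroup M] [Module R M]

theorem ι_mul_ι_comm (x y : M) : ι R x * ι R y = -(ι R y * ι R x) :=
  eq_neg_of_add_eq_zero_left (ι_add_mul_swap x y)

theorem ι_mul_ι_mul_ι_self (x y : M) : ι R x * ι R y * ι R x = 0 := by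
  rw [ι_mul_ι_comm x y, neg_mul, mul_assoc, ι_sq_zero, mul_zero, neg_zero]

theorem ι_mul_ι_mul_ι_add_swap (x y z : M) :
    ι R x * ι R y * ι R z + ι R z * ι R y * ι R x = 0 := by
  rw [ι_mul_ι_comm x y, ι_mul_ι_comm z y, neg_mul, neg_mul, mul_assoc, mul_assoc, ← neg_add,
    ← mul_add, ι_add_mul_swap, mul_zero, neg_zero]

theorem ι_mul_ι_mem_center (x y : M) :
    ι R x * ι R y ∈ Subalgebra.center R (ExteriorAlgebra R M) := by
  rw [Subalgebra.mem_center_iff]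
  intro a
  induction a using ExteriorAlgebra.induction with
  | algebraMap r => exact Algebra.commutes r _
  | ι z =>
    rw [← mul_assoc, ι_mul_ι_comm z x, neg_mul, mul_assoc, ι_mul_ι_comm z y, mul_neg, neg_neg,
      ← mul_assoc]
  | mul a b ha hb => rw [mul_assoc, hb, ← mul_assoc, ha, mul_assoc]
  | add a b ha hb => rw [add_mul, mul_add, ha, hb]

variable (R) in
def ιMulιCenter (e : M) : M →ₗ[R] Subalgebra.center R (ExteriorAlgebra R M) where
  toFun x := ⟨ι R x * ι R e, ι_mul_ι_mem_center x e⟩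
  map_add' x y := Subtype.ext (by simp [add_mul])
  map_smul' r x := Subtype.ext (by simp)

@[simp]
theorem coe_ιMulιCenter (e x : M) : (ιMulιCenter R e x : ExteriorAlgebra R M) = ι R x * ι R e :=
  rfl

theorem ιMulιCenter_mul_ιMulιCenter_self (x e e' : M) :
    ιMulιCenter R e x * ιMulιCenter R e' x = 0 := by
  ext
  simp [← mul_assoc, ι_mul_ι_mul_ι_self]

open Finset

variable {n : ℕ}

def slotFactor (e : Fin n → M) (i k : Fin n) :
    R × M →ₗ[R] Subalgebra.center R (ExteriorAlgebra R M) :=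
  if k = i then Algebra.linearMap R _ ∘ₗ LinearMap.fst R R M
  else ιMulιCenter R (e k) ∘ₗ LinearMap.snd R R M

/-- On `u = fun i => (y i, w i)` this is `s * t ^ (n - 1) / (n - 1)!`. Moving the scalar `y i`
into the center makes the `i`-th summand `ι (e i)` times a product in a commutative ring, which is
multilinear by `MultilinearMap.mkPiAlgebra`. -/
def mixedProdMultilinear (e : Fin n → M) :
    MultilinearMap R (fun _ : Fin n => R × M) (ExteriorAlgebra R M) :=
  ∑ i, (LinearMap.mulLeft R (ι R (e i)) ∘ₗ
    (Subalgebra.center R (ExteriorAlgebra R M)).val.toLinearMap).compMultilinearMap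
      ((MultilinearMap.mkPiAlgebra R (Fin n) _).compLinearMap (slotFactor e i))

theorem mixedProdMultilinear_apply (e : Fin n → M) (u : Fin n → R × M) :
    mixedProdMultilinear e u =
      ∑ i, (u i).1 • ι R (e i) * ↑(∏ k ∈ univ.erase i, ιMulιCenter R (e k) (u k).2) := by
  simp only [mixedProdMultilinear, _root_.sum_apply, LinearMap.compMultilinearMap_apply,
    MultilinearMap.compLinearMap_apply, MultilinearMap.mkPiAlgebra_apply]
  refine sum_congr rfl fun i _ => ?_
  rw [← mul_prod_erase univ _ (mem_univ i)]
  rw [prod_congr rfl fun k hk => by rw [slotFactor, if_neg (ne_of_mem_erase hk)]]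
  simp [slotFactor, ← Algebra.smul_def]

/-- For `u p = u q`, the summands `i ∉ {p, q}` contain the factor
`(ι w * ι (e p)) * (ι w * ι (e q)) = 0`, and the summands `p` and `q` cancel each other. -/
theorem mixedProdMultilinear_eq_zero_of_eq (e : Fin n → M) {u : Fin n → R × M} {p q : Fin n}
    (h : u p = u q) (hpq : p ≠ q) : mixedProdMultilinear e u = 0 := by
  set b : Fin n → Subalgebra.center R (ExteriorAlgebra R M) := fun k => ιMulιCenter R (e k) (u k).2
  have hq : q ∈ univ.erase p := mem_erase.2 ⟨hpq.symm, mem_univ q⟩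
  have hp : p ∈ univ.erase q := mem_erase.2 ⟨hpq, mem_univ p⟩
  rw [mixedProdMultilinear_apply, Fintype.sum_eq_add p q hpq]
  · rw [← mul_prod_erase _ b hq, ← mul_prod_erase _ b hp, erase_right_comm]
    simp only [b, h, Subalgebra.coe_mul, coe_ιMulιCenter, smul_mul_assoc, ← smul_add, ← mul_assoc,
      ← add_mul, ι_mul_ι_mul_ι_add_swap, zero_mul, smul_zero]
  · rintro i ⟨hip, hiq⟩
    have hpi : p ∈ univ.erase i := mem_erase.2 ⟨hip.symm, mem_univ p⟩
    have hqi : q ∈ (univ.erase i).erase p :=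
      mem_erase.2 ⟨hpq.symm, mem_erase.2 ⟨hiq.symm, mem_univ q⟩⟩
    rw [← mul_prod_erase _ b hpi, ← mul_prod_erase _ b hqi, ← mul_assoc]
    simp only [b, h, ιMulιCenter_mul_ιMulιCenter_self, zero_mul, ZeroMemClass.coe_zero, mul_zero]

def mixedProd (e : Fin n → M) : (R × M) [⋀^Fin n]→ₗ[R] ExteriorAlgebra R M :=
  { mixedProdMultilinear e with
    map_eq_zero_of_eq' := fun _ _ _ h hpq => mixedProdMultilinear_eq_zero_of_eq e h hpq }

theorem mixedProd_apply (e : Fin n → M) (u : Fin n → R × M) :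
    mixedProd e u =
      ∑ i, (u i).1 • ι R (e i) * ↑(∏ k ∈ univ.erase i, ιMulιCenter R (e k) (u k).2) :=
  mixedProdMultilinear_apply e u

theorem sum_smul_ι_mul_pow_eq_factorial_smul_mixedProd (e : Fin n → M) (u : Fin n → R × M) :
    (∑ i, (u i).1 • ι R (e i)) * (∑ i, ι R (u i).2 * ι R (e i)) ^ (n - 1) =
      (n - 1)! • mixedProd e u := by
  set b : Fin n → Subalgebra.center R (ExteriorAlgebra R M) := fun k => ιMulιCenter R (e k) (u k).2
  have ht : ∑ i, ι R (u i).2 * ι R (e i) = ↑(∑ k, b k) := by simp [b]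
  rw [ht, ← SubmonoidClass.coe_pow, sum_mul, mixedProd_apply, smul_sum]
  refine sum_congr rfl fun i _ => ?_
  obtain ⟨c, hc⟩ := dvd_sum_pow_sub_factorial_mul_prod_erase
    (fun k _ => ιMulιCenter_mul_ιMulιCenter_self _ _ _) (mem_univ i) (b := b)
  rw [Finset.card_univ, Fintype.card_fin] at hc
  have hpow := eq_add_of_sub_eq' hc
  have hkill : ι R (e i) * (b i : ExteriorAlgebra R M) = 0 := by
    simp [b, ← mul_assoc, ι_mul_ι_mul_ι_self]
  rw [hpow, Subalgebra.coe_add, Subalgebra.coe_mul, Subalgebra.coe_mul, smul_mul_assoc,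
    smul_mul_assoc, mul_add, ← mul_assoc _ (b i : ExteriorAlgebra R M), hkill, zero_mul, add_zero,
    SubringClass.coe_natCast, ← mul_assoc, ← Nat.cast_comm, mul_assoc, nsmul_eq_mul,
    mul_smul_comm]

end ExteriorAlgebra

theorem det_transformation_rule_general {R M : Type*} [CommRing R] [AddCommGroup M] [Module R M]
    {n : ℕ} (A : Matrix (Fin n) (Fin n) R) (y : Fin n → R) (w e : Fin n → M) :
    (∑ i : Fin n, (∑ j : Fin n, A i j * y j) • ι R (e i)) *
        (∑ i : Fin n, ∑ j : Fin n, A i j • (ι R (w j) * ι R (e i))) ^ (n - 1) =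
      A.det •
        ((∑ i : Fin n, y i • ι R (e i)) *
          (∑ i : Fin n, ι R (w i) * ι R (e i)) ^ (n - 1)) := by
  let u : Fin n → R × M := fun j => (y j, w j)
  let uA : Fin n → R × M := fun i => ∑ j, A i j • u j
  have hs : ∑ i, (∑ j, A i j * y j) • ι R (e i) = ∑ i, (uA i).1 • ι R (e i) := by
    simp [uA, u, Prod.fst_sum]
  have ht : ∑ i, ∑ j, A i j • (ι R (w j) * ι R (e i)) = ∑ i, ι R (uA i).2 * ι R (e i) := by
    simp [uA, u, Prod.snd_sum, Finset.sum_mul]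
  rw [hs, ht, sum_smul_ι_mul_pow_eq_factorial_smul_mixedProd,
    AlternatingMap.map_sum_smul_eq_det_smul, sum_smul_ι_mul_pow_eq_factorial_smul_mixedProd e u,
    smul_comm]

/-- Determinant transformation rule from the proof of Theorem 5.1: with
`s = ∑ i, y i • ι (e i)`, `t = ∑ i, ι (w i) * ι (e i)`,
`s_A = ∑ i, (∑ j, A i j * y j) • ι (e i)` and
`t_A = ∑ i, ∑ j, A i j • (ι (w j) * ι (e i))`, one has
`s_A * t_A ^ (n - 1) = det A • (s * t ^ (n - 1))`. -/
theorem det_transformation_rule {R M : Type*} [CommRing R] [AddCommGroup M] [Module R M]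
    {n : ℕ} (hn : 1 ≤ n) (A : Matrix (Fin n) (Fin n) R) (y : Fin n → R) (w e : Fin n → M) :
    (∑ i : Fin n, (∑ j : Fin n, A i j * y j) • ι R (e i)) *
        (∑ i : Fin n, ∑ j : Fin n, A i j • (ι R (w j) * ι R (e i))) ^ (n - 1) =
      A.det •
        ((∑ i : Fin n, y i • ι R (e i)) *
          (∑ i : Fin n, ι R (w i) * ι R (e i)) ^ (n - 1)) :=
  det_transformation_rule_general A y w e
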